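/- Under the hypotheses of the previous statement with Λ(λ) a meromorphic Hermitian-on-the-reals matrix function and g(λ) a meromorphic vector function, the quantity (u₁(·,λ), f₁) = (r(λ)f₁, f₁) − i ∫₀^∞ e^{i√λ x} ⟨A(λ), f₁(x)⟩ dx extends analytically from the upper half-plane through any interval (a,b) ⊂ (0,∞) except for a discrete set of λ. -/

import Mathlib

open MeasureTheory Complex Set Matrix
open Filter

/-- Branch of the square root with positive imaginary part on the upper half-plane
(principal branch). -/
noncomputable def csqrt (z : ℂ) : ℂ := z ^ (1 / 2 : ℂ)

/-- Neumann resolvent on the half-line applied componentwise to `f`, evaluated at `x`. -/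
noncomputable def neumannRes (n : ℕ) (f : ℝ → Fin n → ℂ) (lam : ℂ) (x : ℝ) :
    Fin n → ℂ := fun i =>
  (Complex.I / (2 * csqrt lam)) *
    ∫ s in Ioi (0 : ℝ), (Complex.exp (Complex.I * csqrt lam * ((x : ℂ) + (s : ℂ)))
      + Complex.exp (Complex.I * csqrt lam * ((|x - s| : ℝ) : ℂ))) * f s i

/-- The vector `A(λ) = Λ(λ)(√λ I + iΛ(λ))⁻¹ (r(λ)f)(0) + g(λ)/√λ`. -/
noncomputable def Avec (n : ℕ) (Λ : ℂ → Matrix (Fin n) (Fin n) ℂ) (g : ℂ → Fin n → ℂ)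
    (f : ℝ → Fin n → ℂ) (lam : ℂ) : Fin n → ℂ :=
  (Λ lam).mulVec
      ((csqrt lam • (1 : Matrix (Fin n) (Fin n) ℂ) + Complex.I • Λ lam)⁻¹.mulVec
        (neumannRes n f lam 0))
    + (csqrt lam)⁻¹ • g lam

/-- The quantity `(u₁(·,λ), f₁) = (r(λ)f₁, f₁) − i ∫₀^∞ e^{i√λ x} ⟨A(λ), f₁(x)⟩ dx`. -/
noncomputable def Phi (n : ℕ) (Λ : ℂ → Matrix (Fin n) (Fin n) ℂ) (g : ℂ → Fin n → ℂ)
    (f : ℝ → Fin n → ℂ) (lam : ℂ) : ℂ :=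
  (∫ x in Ioi (0 : ℝ), ∑ i, neumannRes n f lam x i * (starRingEnd ℂ) (f x i))
    - Complex.I * ∫ x in Ioi (0 : ℝ), Complex.exp (Complex.I * csqrt lam * (x : ℂ)) *
        ∑ i, Avec n Λ g f lam i * (starRingEnd ℂ) (f x i)


private lemma aux_bound_integrable {R C : ℝ} :
    Integrable ((Icc (-R) R).indicator fun _ => C) (volume.restrict (Ioi (0:ℝ))) := by
  rw [integrable_indicator_iff measurableSet_Icc]
  refine integrableOn_const ?_
  exact (lt_of_le_of_lt (Measure.restrict_apply_le _ _) measure_Icc_lt_top).ne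

private lemma contParam {X : Type*} [TopologicalSpace X] [LocallyCompactSpace X] [FirstCountableTopology X]
    {K : X → ℝ → ℂ} {R : ℝ}
    (hK : Continuous fun p : X × ℝ => K p.1 p.2)
    (hsupp : ∀ p s, s ∉ Icc (-R) R → K p s = 0) :
    Continuous fun p => ∫ s in Ioi (0:ℝ), K p s := by
  rw [continuous_iff_continuousAt]
  intro p₀
  obtain ⟨N, hNc, hN⟩ := exists_compact_mem_nhds p₀
  obtain ⟨C, hC⟩ := (hNc.prod isCompact_Icc).exists_bound_of_continuousOn
      (hK.continuousOn (s := N ×ˢ Icc (-R) R))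
  refine continuousAt_of_dominated (bound := (Icc (-R) R).indicator fun _ => C) ?_ ?_ aux_bound_integrable ?_
  · filter_upwards with p
    exact (hK.comp (Continuous.prodMk_right p)).aestronglyMeasurable
  · filter_upwards [hN] with p hp
    filter_upwards with s
    by_cases hs : s ∈ Icc (-R) R
    · rw [indicator_of_mem hs]
      exact hC (p, s) (mk_mem_prod hp hs)
    · rw [hsupp p s hs, indicator_of_notMem hs, norm_zero]
  · filter_upwards with s
    exact ((hK.comp (continuous_id.prodMk continuous_const)).continuousAt :)

private lemma derivParam {K K' : ℂ → ℝ → ℂ} {R : ℝ}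
    (hK : Continuous fun p : ℂ × ℝ => K p.1 p.2)
    (hK' : Continuous fun p : ℂ × ℝ => K' p.1 p.2)
    (hd : ∀ c s, HasDerivAt (fun z => K z s) (K' c s) c)
    (hsupp : ∀ c s, s ∉ Icc (-R) R → K c s = 0) (c₀ : ℂ) :
    HasDerivAt (fun c => ∫ s in Ioi (0:ℝ), K c s) (∫ s in Ioi (0:ℝ), K' c₀ s) c₀ := by
  have hsupp' : ∀ c s, s ∉ Icc (-R) R → K' c s = 0 := by
    intro c s hs
    have h0 : (fun z : ℂ => K z s) = fun _ => (0:ℂ) := funext fun z => hsupp z s hs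
    have h1 := hd c s
    rw [h0] at h1
    exact h1.unique (hasDerivAt_const c 0)
  obtain ⟨C, hC⟩ := ((isCompact_closedBall c₀ 1).prod isCompact_Icc).exists_bound_of_continuousOn
      (hK'.continuousOn (s := Metric.closedBall c₀ 1 ×ˢ Icc (-R) R))
  have key := hasDerivAt_integral_of_dominated_loc_of_deriv_le
      (F := K) (F' := K') (bound := (Icc (-R) R).indicator fun _ => C)
      (μ := volume.restrict (Ioi (0:ℝ))) (x₀ := c₀) (Metric.ball_mem_nhds c₀ one_pos)
      ?_ ?_ ?_ ?_ aux_bound_integrable ?_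
  · exact key.2
  · filter_upwards with c
    exact (hK.comp (Continuous.prodMk_right c)).aestronglyMeasurable
  · refine ((hK.comp (Continuous.prodMk_right c₀)).integrable_of_hasCompactSupport ?_).restrict
    exact HasCompactSupport.intro isCompact_Icc fun s hs => hsupp c₀ s hs
  · exact (hK'.comp (Continuous.prodMk_right c₀)).aestronglyMeasurable
  · filter_upwards with s
    intro c hc
    by_cases hs : s ∈ Icc (-R) R
    · rw [indicator_of_mem hs]
      exact hC (c, s) (mk_mem_prod (Metric.ball_subset_closedBall hc) hs)
    · rw [hsupp' c s hs, indicator_of_notMem hs, norm_zero]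
  · filter_upwards with s
    intro c _
    exact hd c s

private lemma meromorphicAt_sum {ι : Type*} (s : Finset ι) (F : ι → ℂ → ℂ) {x : ℂ}
    (h : ∀ i ∈ s, MeromorphicAt (F i) x) :
    MeromorphicAt (fun z => ∑ i ∈ s, F i z) x := by
  classical
  induction s using Finset.induction with
  | empty => simpa using MeromorphicAt.const (0:ℂ) x
  | @insert a t ha ih =>
    have : (fun z => ∑ i ∈ insert a t, F i z) = fun z => F a z + ∑ i ∈ t, F i z := by
      funext z; rw [Finset.sum_insert ha]
    rw [this]
    exact (h a (Finset.mem_insert_self a t)).add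
      (ih fun i hi => h i (Finset.mem_insert_of_mem hi))

private lemma meromorphicAt_prod {ι : Type*} (s : Finset ι) (F : ι → ℂ → ℂ) {x : ℂ}
    (h : ∀ i ∈ s, MeromorphicAt (F i) x) :
    MeromorphicAt (fun z => ∏ i ∈ s, F i z) x := by
  classical
  induction s using Finset.induction with
  | empty => simpa using MeromorphicAt.const (1:ℂ) x
  | @insert a t ha ih =>
    have : (fun z => ∏ i ∈ insert a t, F i z) = fun z => F a z * ∏ i ∈ t, F i z := by
      funext z; rw [Finset.prod_insert ha]
    rw [this]
    exact (h a (Finset.mem_insert_self a t)).mul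
      (ih fun i hi => h i (Finset.mem_insert_of_mem hi))

private lemma meromorphicAt_det {n : ℕ} {M : ℂ → Matrix (Fin n) (Fin n) ℂ} {x : ℂ}
    (h : ∀ i j, MeromorphicAt (fun z => M z i j) x) :
    MeromorphicAt (fun z => (M z).det) x := by
  have : (fun z => (M z).det)
      = fun z => ∑ σ : Equiv.Perm (Fin n), (Equiv.Perm.sign σ : ℂ) * ∏ i, M z (σ i) i := by
    funext z; rw [Matrix.det_apply']
  rw [this]
  refine meromorphicAt_sum _ _ fun σ _ => (MeromorphicAt.const _ x).mul ?_
  exact meromorphicAt_prod _ _ fun i _ => h (σ i) i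

private lemma detDiffOn {n : ℕ} {S : Set ℂ} {M : ℂ → Matrix (Fin n) (Fin n) ℂ}
    (h : ∀ i j, DifferentiableOn ℂ (fun w => M w i j) S) :
    DifferentiableOn ℂ (fun w => (M w).det) S := by
  have : (fun w => (M w).det)
      = fun w => ∑ σ : Equiv.Perm (Fin n), (Equiv.Perm.sign σ : ℂ) * ∏ i, M w (σ i) i := by
    funext w; rw [Matrix.det_apply']
  rw [this]
  refine DifferentiableOn.fun_sum fun σ _ => DifferentiableOn.const_mul ?_ _
  exact DifferentiableOn.fun_finset_prod fun i _ => h (σ i) i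

private lemma adjDiffOn {n : ℕ} {S : Set ℂ} {M : ℂ → Matrix (Fin n) (Fin n) ℂ}
    (h : ∀ i j, DifferentiableOn ℂ (fun w => M w i j) S) (i j : Fin n) :
    DifferentiableOn ℂ (fun w => (M w).adjugate i j) S := by
  have : (fun w => (M w).adjugate i j)
      = fun w => ((M w).updateRow j (Pi.single i 1)).det := by
    funext w; rw [Matrix.adjugate_apply]
  rw [this]
  refine detDiffOn fun k l => ?_
  rcases eq_or_ne k j with rfl | hk
  · simp only [Matrix.updateRow_self]
    exact differentiableOn_const _
  · simp only [Matrix.updateRow_ne hk]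
    exact h k l

private lemma merom_ev_ne {h : ℂ → ℂ} {x : ℂ} (hm : MeromorphicAt h x)
    (hne : ¬ ∀ᶠ z in nhdsWithin x {x}ᶜ, h z = 0) :
    ∀ᶠ z in nhdsWithin x {x}ᶜ, h z ≠ 0 := by
  rw [← meromorphicOrderAt_eq_top_iff] at hne
  obtain ⟨m, hm'⟩ := WithTop.ne_top_iff_exists.mp hne
  obtain ⟨g, hg, hg0, heq⟩ := (meromorphicOrderAt_eq_int_iff hm).mp hm'.symm
  have hgne : ∀ᶠ z in nhds x, g z ≠ 0 := hg.continuousAt.eventually_ne hg0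
  filter_upwards [heq, eventually_nhdsWithin_of_eventually_nhds hgne,
    self_mem_nhdsWithin] with z h1 h2 h3
  rw [h1, smul_eq_mul]
  exact mul_ne_zero (zpow_ne_zero _ (sub_ne_zero.mpr h3)) h2

private lemma csqrt_diffAt {z : ℂ} (hz : z ∈ Complex.slitPlane) :
    DifferentiableAt ℂ csqrt z := by
  have : DifferentiableAt ℂ (fun w : ℂ => w ^ (1/2 : ℂ)) z :=
    differentiableAt_id.cpow (differentiableAt_const _) hz
  exact this

private lemma csqrt_ne_zero {z : ℂ} (hz : z ∈ Complex.slitPlane) : csqrt z ≠ 0 := by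
  intro h
  rw [csqrt, Complex.cpow_eq_zero_iff] at h
  exact Complex.slitPlane_ne_zero hz h.1

private lemma csqrt_analyticAt {z : ℂ} (hz : z ∈ Complex.slitPlane) :
    AnalyticAt ℂ csqrt z := by
  refine DifferentiableOn.analyticAt (s := Complex.slitPlane) ?_
    (Complex.isOpen_slitPlane.mem_nhds hz)
  exact fun w hw => (csqrt_diffAt hw).differentiableWithinAt

private lemma tendsto_upper (x : ℝ) :
    Tendsto (fun δ : ℝ => (x:ℂ) + δ * Complex.I) (nhdsWithin 0 (Ioi 0))
      (nhdsWithin (x:ℂ) {(x:ℂ)}ᶜ) := by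
  rw [tendsto_nhdsWithin_iff]
  constructor
  · have hc : Continuous (fun δ : ℝ => (x:ℂ) + δ * Complex.I) := by fun_prop
    have h2 : Tendsto (fun δ : ℝ => (x:ℂ) + δ * Complex.I) (nhdsWithin 0 (Ioi 0)) (nhds ((x:ℂ) + (0:ℝ) * Complex.I)) :=
      (hc.tendsto 0).mono_left nhdsWithin_le_nhds
    simpa using h2
  · filter_upwards [self_mem_nhdsWithin] with δ (hδ : (0:ℝ) < δ)
    simp only [mem_compl_iff, mem_singleton_iff]
    intro h
    have : ((x:ℂ) + δ * Complex.I).im = (0:ℝ) := by rw [h]; simp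
    simp at this
    exact hδ.ne' this

private lemma tendsto_real_punctured (x : ℝ) :
    Tendsto (fun y : ℝ => (y:ℂ)) (nhdsWithin x {x}ᶜ)
      (nhdsWithin (x:ℂ) {(x:ℂ)}ᶜ) := by
  rw [tendsto_nhdsWithin_iff]
  constructor
  · exact (Complex.continuous_ofReal.tendsto x).mono_left nhdsWithin_le_nhds
  · filter_upwards [self_mem_nhdsWithin] with y hy
    simp only [mem_compl_iff, mem_singleton_iff] at hy ⊢
    exact fun h => hy (Complex.ofReal_injective h)
section kernels
variable {n : ℕ}

private noncomputable def GG (f : ℝ → Fin n → ℂ) (i : Fin n) (c : ℂ) (x : ℝ) : ℂ :=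
  ∫ s in Ioi (0 : ℝ), (Complex.exp (Complex.I * c * ((x : ℂ) + (s : ℂ)))
      + Complex.exp (Complex.I * c * ((|x - s| : ℝ) : ℂ))) * f s i

private noncomputable def GG' (f : ℝ → Fin n → ℂ) (i : Fin n) (c : ℂ) (x : ℝ) : ℂ :=
  ∫ s in Ioi (0 : ℝ), (Complex.exp (Complex.I * c * ((x : ℂ) + (s : ℂ))) * (Complex.I * ((x : ℂ) + (s : ℂ)))
      + Complex.exp (Complex.I * c * ((|x - s| : ℝ) : ℂ)) * (Complex.I * ((|x - s| : ℝ) : ℂ))) * f s i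

private noncomputable def TT (f : ℝ → Fin n → ℂ) (c : ℂ) : ℂ :=
  ∫ x in Ioi (0 : ℝ), ∑ i, GG f i c x * (starRingEnd ℂ) (f x i)

private noncomputable def SS (f : ℝ → Fin n → ℂ) (i : Fin n) (c : ℂ) : ℂ :=
  ∫ x in Ioi (0 : ℝ), Complex.exp (Complex.I * c * (x : ℂ)) * (starRingEnd ℂ) (f x i)

lemma neumannRes_eq (f : ℝ → Fin n → ℂ) (lam : ℂ) (x : ℝ) (i : Fin n) :
    neumannRes n f lam x i = Complex.I / (2 * csqrt lam) * GG f i (csqrt lam) x := rfl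

private lemma hasDerivAt_cexp_lin (a c : ℂ) :
    HasDerivAt (fun z : ℂ => Complex.exp (Complex.I * z * a))
      (Complex.exp (Complex.I * c * a) * (Complex.I * a)) c := by
  have h1 : HasDerivAt (fun z : ℂ => Complex.I * z * a) (Complex.I * a) c := by
    simpa using ((hasDerivAt_id c).const_mul Complex.I).mul_const a
  exact h1.cexp

variable {f : ℝ → Fin n → ℂ} {R : ℝ}

private lemma fc (hf : Continuous f) (i : Fin n) : Continuous fun s : ℝ => f s i :=
  (continuous_apply i).comp hf

private lemma fz (hR : ∀ s : ℝ, s ∉ Icc (-R) R → f s = 0) (i : Fin n) {s : ℝ}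
    (hs : s ∉ Icc (-R) R) : f s i = 0 := by
  rw [hR s hs]; rfl

private lemma ker_cont (hf : Continuous f) (i : Fin n) :
    Continuous fun q : (ℂ × ℝ) × ℝ =>
      (Complex.exp (Complex.I * q.1.1 * ((q.1.2 : ℂ) + (q.2 : ℂ)))
        + Complex.exp (Complex.I * q.1.1 * ((|q.1.2 - q.2| : ℝ) : ℂ))) * f q.2 i := by
  have h1 : Continuous fun q : (ℂ × ℝ) × ℝ => f q.2 i := (fc hf i).comp continuous_snd
  fun_prop

private lemma ker'_cont (hf : Continuous f) (i : Fin n) :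
    Continuous fun q : (ℂ × ℝ) × ℝ =>
      (Complex.exp (Complex.I * q.1.1 * ((q.1.2 : ℂ) + (q.2 : ℂ))) * (Complex.I * ((q.1.2 : ℂ) + (q.2 : ℂ)))
        + Complex.exp (Complex.I * q.1.1 * ((|q.1.2 - q.2| : ℝ) : ℂ)) * (Complex.I * ((|q.1.2 - q.2| : ℝ) : ℂ))) * f q.2 i := by
  have h1 : Continuous fun q : (ℂ × ℝ) × ℝ => f q.2 i := (fc hf i).comp continuous_snd
  fun_prop
end kernels

section kernels2
variable {n : ℕ} {f : ℝ → Fin n → ℂ} {R : ℝ}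

private lemma GG_cont (hf : Continuous f) (hR : ∀ s : ℝ, s ∉ Icc (-R) R → f s = 0)
    (i : Fin n) : Continuous fun p : ℂ × ℝ => GG f i p.1 p.2 := by
  unfold GG
  exact contParam (ker_cont hf i) fun p s hs => by rw [fz hR i hs, mul_zero]

private lemma GG'_cont (hf : Continuous f) (hR : ∀ s : ℝ, s ∉ Icc (-R) R → f s = 0)
    (i : Fin n) : Continuous fun p : ℂ × ℝ => GG' f i p.1 p.2 := by
  unfold GG'
  exact contParam (ker'_cont hf i) fun p s hs => by rw [fz hR i hs, mul_zero]

private lemma GG_hasDeriv (hf : Continuous f) (hR : ∀ s : ℝ, s ∉ Icc (-R) R → f s = 0)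
    (i : Fin n) (x : ℝ) (c : ℂ) :
    HasDerivAt (fun c => GG f i c x) (GG' f i c x) c := by
  have h0 : Continuous fun p : ℂ × ℝ => (((p.1, x), p.2) : (ℂ × ℝ) × ℝ) :=
    ((continuous_fst.prodMk continuous_const)).prodMk continuous_snd
  have h1 := (ker_cont hf i).comp h0
  have h2 := (ker'_cont hf i).comp h0
  unfold GG GG'
  refine derivParam (R := R)
    (K := fun c s => (Complex.exp (Complex.I * c * ((x : ℂ) + (s : ℂ)))
      + Complex.exp (Complex.I * c * ((|x - s| : ℝ) : ℂ))) * f s i)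
    (K' := fun c s => (Complex.exp (Complex.I * c * ((x : ℂ) + (s : ℂ))) * (Complex.I * ((x : ℂ) + (s : ℂ)))
      + Complex.exp (Complex.I * c * ((|x - s| : ℝ) : ℂ)) * (Complex.I * ((|x - s| : ℝ) : ℂ))) * f s i)
    ?_ ?_ ?_ ?_ c
  · exact h1
  · exact h2
  · intro c s
    exact ((hasDerivAt_cexp_lin _ c).add (hasDerivAt_cexp_lin _ c)).mul_const _
  · intro c s hs
    exact mul_eq_zero_of_right _ (fz hR i hs)

private lemma TT_hasDeriv (hf : Continuous f) (hR : ∀ s : ℝ, s ∉ Icc (-R) R → f s = 0)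
    (c₀ : ℂ) :
    HasDerivAt (TT f)
      (∫ x in Ioi (0:ℝ), ∑ i, GG' f i c₀ x * (starRingEnd ℂ) (f x i)) c₀ := by
  have h1 : Continuous fun p : ℂ × ℝ => ∑ i, GG f i p.1 p.2 * (starRingEnd ℂ) (f p.2 i) := by
    refine continuous_finset_sum _ fun i _ => ?_
    exact (GG_cont hf hR i).mul
      (Complex.continuous_conj.comp ((fc hf i).comp continuous_snd))
  have h2 : Continuous fun p : ℂ × ℝ => ∑ i, GG' f i p.1 p.2 * (starRingEnd ℂ) (f p.2 i) := by
    refine continuous_finset_sum _ fun i _ => ?_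
    exact (GG'_cont hf hR i).mul
      (Complex.continuous_conj.comp ((fc hf i).comp continuous_snd))
  unfold TT
  refine derivParam (R := R)
    (K := fun c x => ∑ i, GG f i c x * (starRingEnd ℂ) (f x i))
    (K' := fun c x => ∑ i, GG' f i c x * (starRingEnd ℂ) (f x i))
    ?_ ?_ ?_ ?_ c₀
  · exact h1
  · exact h2
  · intro c x
    exact HasDerivAt.fun_sum fun i _ => (GG_hasDeriv hf hR i x c).mul_const _
  · intro c x hx
    exact Finset.sum_eq_zero fun i _ =>
      mul_eq_zero_of_right _ (by rw [fz hR i hx]; exact map_zero _)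

private lemma TT_diff (hf : Continuous f) (hR : ∀ s : ℝ, s ∉ Icc (-R) R → f s = 0) :
    Differentiable ℂ (TT f) := fun c₀ => (TT_hasDeriv hf hR c₀).differentiableAt

private lemma SS_diff (hf : Continuous f) (hR : ∀ s : ℝ, s ∉ Icc (-R) R → f s = 0)
    (i : Fin n) : Differentiable ℂ (SS f i) := by
  intro c₀
  unfold SS
  refine (derivParam (R := R)
      (K' := fun c x => Complex.exp (Complex.I * c * (x:ℂ)) * (Complex.I * (x:ℂ))
        * (starRingEnd ℂ) (f x i)) ?_ ?_ ?_ ?_ c₀).differentiableAt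
  · have h1 : Continuous fun q : ℂ × ℝ => (starRingEnd ℂ) (f q.2 i) :=
      Complex.continuous_conj.comp ((fc hf i).comp continuous_snd)
    fun_prop
  · have h1 : Continuous fun q : ℂ × ℝ => (starRingEnd ℂ) (f q.2 i) :=
      Complex.continuous_conj.comp ((fc hf i).comp continuous_snd)
    fun_prop
  · intro c x
    exact (hasDerivAt_cexp_lin _ c).mul_const _
  · intro c x hx
    exact mul_eq_zero_of_right _ (by rw [fz hR i hx]; exact map_zero _)

end kernels2
section phi
variable {n : ℕ} {f : ℝ → Fin n → ℂ} {R : ℝ}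

private lemma Phi_eq (Λ : ℂ → Matrix (Fin n) (Fin n) ℂ) (g : ℂ → Fin n → ℂ)
    (hf : Continuous f) (hR : ∀ s : ℝ, s ∉ Icc (-R) R → f s = 0) (w : ℂ) :
    Phi n Λ g f w = Complex.I / (2 * csqrt w) * TT f (csqrt w)
      - Complex.I * ∑ i, Avec n Λ g f w i * SS f i (csqrt w) := by
  unfold Phi
  congr 1
  · have e1 : ∀ x : ℝ, ∑ i, neumannRes n f w x i * (starRingEnd ℂ) (f x i)
        = Complex.I / (2 * csqrt w)
            * ∑ i, GG f i (csqrt w) x * (starRingEnd ℂ) (f x i) := by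
      intro x
      rw [Finset.mul_sum]
      refine Finset.sum_congr rfl fun i _ => ?_
      rw [neumannRes_eq, mul_assoc]
    simp_rw [e1]
    rw [MeasureTheory.integral_const_mul]
    rfl
  · congr 1
    have e2 : ∀ x : ℝ, Complex.exp (Complex.I * csqrt w * (x:ℂ))
          * ∑ i, Avec n Λ g f w i * (starRingEnd ℂ) (f x i)
        = ∑ i, Avec n Λ g f w i
            * (Complex.exp (Complex.I * csqrt w * (x:ℂ)) * (starRingEnd ℂ) (f x i)) := by
      intro x
      rw [Finset.mul_sum]
      refine Finset.sum_congr rfl fun i _ => ?_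
      ring
    simp_rw [e2]
    rw [MeasureTheory.integral_finset_sum]
    · refine Finset.sum_congr rfl fun i _ => ?_
      rw [MeasureTheory.integral_const_mul]
      rfl
    · intro i _
      refine (Continuous.integrable_of_hasCompactSupport ?_ ?_).restrict
      · have h1 : Continuous fun x : ℝ => (starRingEnd ℂ) (f x i) :=
          Complex.continuous_conj.comp (fc hf i)
        fun_prop
      · refine HasCompactSupport.intro (isCompact_Icc (a := -R) (b := R)) fun x hx => ?_
        rw [fz hR i hx]
        simp

private lemma phiDiffOn (Λ : ℂ → Matrix (Fin n) (Fin n) ℂ) (g : ℂ → Fin n → ℂ)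
    (hf : Continuous f) (hR : ∀ s : ℝ, s ∉ Icc (-R) R → f s = 0)
    {B : Set ℂ} (hBslit : B ⊆ Complex.slitPlane)
    (hΛ : ∀ i j, ∀ z ∈ B, DifferentiableAt ℂ (fun w => Λ w i j) z)
    (hg : ∀ i, ∀ z ∈ B, DifferentiableAt ℂ (fun w => g w i) z)
    (hdet : ∀ z ∈ B, (csqrt z • (1 : Matrix (Fin n) (Fin n) ℂ) + Complex.I • Λ z).det ≠ 0) :
    DifferentiableOn ℂ (Phi n Λ g f) B := by
  have hcsq : DifferentiableOn ℂ csqrt B := fun z hz =>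
    (csqrt_diffAt (hBslit hz)).differentiableWithinAt
  have hcne : ∀ z ∈ B, csqrt z ≠ 0 := fun z hz => csqrt_ne_zero (hBslit hz)
  have hΛ' : ∀ i j, DifferentiableOn ℂ (fun w => Λ w i j) B := fun i j z hz =>
    (hΛ i j z hz).differentiableWithinAt
  have hg' : ∀ i, DifferentiableOn ℂ (fun w => g w i) B := fun i z hz =>
    (hg i z hz).differentiableWithinAt
  have hpref : DifferentiableOn ℂ (fun w => Complex.I / (2 * csqrt w)) B := by
    refine (differentiableOn_const _).div ((differentiableOn_const (2:ℂ)).mul hcsq) ?_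
    exact fun z hz => mul_ne_zero two_ne_zero (hcne z hz)
  have hM : ∀ i j, DifferentiableOn ℂ
      (fun w => (csqrt w • (1 : Matrix (Fin n) (Fin n) ℂ) + Complex.I • Λ w) i j) B := by
    intro i j
    have he : (fun w => (csqrt w • (1 : Matrix (Fin n) (Fin n) ℂ) + Complex.I • Λ w) i j)
        = fun w => csqrt w * (1 : Matrix (Fin n) (Fin n) ℂ) i j + Complex.I * Λ w i j := by
      funext w
      simp [Matrix.add_apply, Matrix.smul_apply, smul_eq_mul]
    rw [he]
    exact (hcsq.mul_const _).add ((hΛ' i j).const_mul _)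
  have hdetD : DifferentiableOn ℂ
      (fun w => (csqrt w • (1 : Matrix (Fin n) (Fin n) ℂ) + Complex.I • Λ w).det) B :=
    detDiffOn hM
  have hadj : ∀ j k, DifferentiableOn ℂ
      (fun w => (csqrt w • (1 : Matrix (Fin n) (Fin n) ℂ) + Complex.I • Λ w).adjugate j k) B :=
    fun j k => adjDiffOn hM j k
  have hnres : ∀ k, DifferentiableOn ℂ (fun w => neumannRes n f w 0 k) B := by
    intro k
    have h1 : (fun w => neumannRes n f w 0 k)
        = fun w => Complex.I / (2 * csqrt w) * GG f k (csqrt w) 0 := rfl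
    rw [h1]
    refine hpref.mul ?_
    have h2 : Differentiable ℂ (fun c => GG f k c 0) := fun c =>
      (GG_hasDeriv hf hR k 0 c).differentiableAt
    exact h2.comp_differentiableOn hcsq
  have hA : ∀ i, DifferentiableOn ℂ (fun w => Avec n Λ g f w i) B := by
    intro i
    have he : (fun w => Avec n Λ g f w i) = fun w =>
        (∑ j, Λ w i j * (((csqrt w • (1 : Matrix (Fin n) (Fin n) ℂ) + Complex.I • Λ w).det)⁻¹
          * ((csqrt w • (1 : Matrix (Fin n) (Fin n) ℂ) + Complex.I • Λ w).adjugate j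
              ⬝ᵥ neumannRes n f w 0)))
        + (csqrt w)⁻¹ * g w i := by
      funext w
      simp only [Avec, Matrix.mulVec, dotProduct, Matrix.inv_def, Ring.inverse_eq_inv',
        Matrix.smul_apply, smul_eq_mul, Pi.add_apply, Pi.smul_apply, Matrix.mul_apply,
        Finset.sum_mul, Finset.mul_sum]
      refine congrArg₂ (· + ·) ?_ rfl
      refine Finset.sum_congr rfl fun j _ => Finset.sum_congr rfl fun k _ => by ring
    rw [he]
    refine DifferentiableOn.add ?_ ((hcsq.inv hcne).mul (hg' i))
    refine DifferentiableOn.fun_sum fun j _ => (hΛ' i j).mul ?_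
    refine (hdetD.inv hdet).mul ?_
    refine DifferentiableOn.fun_sum fun k _ => (hadj j k).mul (hnres k)
  have hT : Differentiable ℂ (TT f) := TT_diff hf hR
  have hS : ∀ i, Differentiable ℂ (SS f i) := fun i => SS_diff hf hR i
  have hmain : DifferentiableOn ℂ (fun w => Complex.I / (2 * csqrt w) * TT f (csqrt w)
      - Complex.I * ∑ i, Avec n Λ g f w i * SS f i (csqrt w)) B := by
    refine DifferentiableOn.sub ?_ ?_
    · exact hpref.mul (hT.comp_differentiableOn hcsq)
    · refine DifferentiableOn.const_mul ?_ _
      exact DifferentiableOn.fun_sum fun i _ => (hA i).mul ((hS i).comp_differentiableOn hcsq)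
  exact hmain.congr fun w _ => Phi_eq Λ g hf hR w

end phi
private lemma detContAt {n : ℕ} {M : ℂ → Matrix (Fin n) (Fin n) ℂ} {z : ℂ}
    (h : ∀ i j, ContinuousAt (fun w => M w i j) z) :
    ContinuousAt (fun w => (M w).det) z := by
  have he : (fun w => (M w).det)
      = fun w => ∑ σ : Equiv.Perm (Fin n), (Equiv.Perm.sign σ : ℂ) * ∏ i, M w (σ i) i :=
    funext fun w => Matrix.det_apply' _
  rw [he]
  exact tendsto_finset_sum _ fun σ _ =>
    tendsto_const_nhds.mul (tendsto_finset_prod _ fun i _ => h (σ i) i)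


/-- With `Λ(λ)` a meromorphic matrix function, Hermitian on the reals, and
`g(λ)` a meromorphic vector function (both analytic on the upper half-plane, where
`√λ I + iΛ(λ)` is invertible), the quantity `(u₁(·,λ), f₁)` extends analytically from the
upper half-plane through any interval `(a,b) ⊂ (0,∞)` except for a discrete set of `λ`. -/
theorem inner_product_analytic_continuation
    (n : ℕ) (U : Set ℂ) (hU : IsOpen U) (hconn : IsConnected U)
    (a b : ℝ) (ha : 0 < a) (hab : a < b)
    (hsub : ({z : ℂ | 0 < z.im} ∪ (fun x : ℝ => (x : ℂ)) '' Ioo a b) ⊆ U)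
    (hslit : U ⊆ Complex.slitPlane)
    (Λ : ℂ → Matrix (Fin n) (Fin n) ℂ) (g : ℂ → Fin n → ℂ)
    (hΛmero : ∀ i j, MeromorphicOn (fun z => Λ z i j) U)
    (hgmero : ∀ i, MeromorphicOn (fun z => g z i) U)
    (hΛup : ∀ i j, DifferentiableOn ℂ (fun z => Λ z i j) {z : ℂ | 0 < z.im})
    (hgup : ∀ i, DifferentiableOn ℂ (fun z => g z i) {z : ℂ | 0 < z.im})
    (hinvup : ∀ z : ℂ, 0 < z.im →
      IsUnit (csqrt z • (1 : Matrix (Fin n) (Fin n) ℂ) + Complex.I • Λ z))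
    (hherm : ∀ x ∈ Ioo a b, (∀ i j, AnalyticAt ℂ (fun z => Λ z i j) ((x : ℝ) : ℂ)) →
      (Λ ((x : ℝ) : ℂ)).IsHermitian)
    (f : ℝ → Fin n → ℂ) (hf : ContDiff ℝ (⊤ : ℕ∞) f) (hsupp : HasCompactSupport f) :
    ∃ D : Set ℝ, D ⊆ Ioo a b ∧
      (∀ x ∈ Ioo a b, ¬ AccPt x (Filter.principal D)) ∧
      ∀ x ∈ Ioo a b \ D, ∃ ε > (0 : ℝ), ∃ F : ℂ → ℂ,
        DifferentiableOn ℂ F (Metric.ball ((x : ℝ) : ℂ) ε) ∧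
        ∀ w ∈ Metric.ball ((x : ℝ) : ℂ) ε, 0 < w.im → F w = Phi n Λ g f w := by
  classical
  obtain ⟨R, hRball⟩ := hsupp.isCompact.isBounded.subset_closedBall 0
  have hR : ∀ s : ℝ, s ∉ Icc (-R) R → f s = 0 := by
    intro s hs
    apply image_eq_zero_of_notMem_tsupport
    intro hmem
    have := hRball hmem
    rw [Real.closedBall_eq_Icc, zero_sub, zero_add] at this
    exact hs this
  have hfc : Continuous f := hf.continuous
  set h : ℂ → ℂ :=
    fun z => (csqrt z • (1 : Matrix (Fin n) (Fin n) ℂ) + Complex.I • Λ z).det with hhdef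
  have hmemU : ∀ x ∈ Ioo a b, ((x:ℝ):ℂ) ∈ U := fun x hx => hsub (Or.inr ⟨x, hx, rfl⟩)
  have hslitx : ∀ x ∈ Ioo a b, ((x:ℝ):ℂ) ∈ Complex.slitPlane := by
    intro x hx
    exact Or.inl (by simpa using lt_trans ha hx.1)
  have hMent : ∀ (i j : Fin n), ∀ z ∈ U, MeromorphicAt
      (fun w => (csqrt w • (1 : Matrix (Fin n) (Fin n) ℂ) + Complex.I • Λ w) i j) z := by
    intro i j z hz
    have he : (fun w => (csqrt w • (1 : Matrix (Fin n) (Fin n) ℂ) + Complex.I • Λ w) i j)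
        = fun w => csqrt w * (1 : Matrix (Fin n) (Fin n) ℂ) i j + Complex.I * Λ w i j := by
      funext w
      simp [Matrix.add_apply, Matrix.smul_apply, smul_eq_mul]
    rw [he]
    refine MeromorphicAt.add ?_ ?_
    · exact (csqrt_analyticAt (hslit hz)).meromorphicAt.mul (MeromorphicAt.const _ z)
    · exact (MeromorphicAt.const _ z).mul (hΛmero i j z hz)
  have hhmero : ∀ z ∈ U, MeromorphicAt h z := fun z hz =>
    meromorphicAt_det (fun i j => hMent i j z hz)
  have hupne : ∀ z : ℂ, 0 < z.im → h z ≠ 0 := fun z hz =>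
    ((Matrix.isUnit_iff_isUnit_det _).mp (hinvup z hz)).ne_zero
  have hev : ∀ x ∈ Ioo a b, ∀ᶠ z in nhdsWithin ((x:ℝ):ℂ) {((x:ℝ):ℂ)}ᶜ,
      ((∀ i j, AnalyticAt ℂ (fun w => Λ w i j) z)
        ∧ (∀ i, AnalyticAt ℂ (fun w => g w i) z) ∧ h z ≠ 0) := by
    intro x hx
    have hxU : ((x:ℝ):ℂ) ∈ U := hmemU x hx
    have h1 : ∀ᶠ z in nhdsWithin ((x:ℝ):ℂ) {((x:ℝ):ℂ)}ᶜ,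
        ∀ i j, AnalyticAt ℂ (fun w => Λ w i j) z := by
      rw [eventually_all]
      intro i
      rw [eventually_all]
      intro j
      exact (hΛmero i j _ hxU).eventually_analyticAt
    have h2 : ∀ᶠ z in nhdsWithin ((x:ℝ):ℂ) {((x:ℝ):ℂ)}ᶜ,
        ∀ i, AnalyticAt ℂ (fun w => g w i) z := by
      rw [eventually_all]
      intro i
      exact (hgmero i _ hxU).eventually_analyticAt
    have h3 : ∀ᶠ z in nhdsWithin ((x:ℝ):ℂ) {((x:ℝ):ℂ)}ᶜ, h z ≠ 0 := by
      refine merom_ev_ne (hhmero _ hxU) ?_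
      intro hzero
      have h5 := (tendsto_upper x).eventually hzero
      have h6 : ∀ᶠ δ in nhdsWithin (0:ℝ) (Ioi 0), δ ∈ Ioi (0:ℝ) := self_mem_nhdsWithin
      obtain ⟨δ, h7, h8⟩ := (h5.and h6).exists
      refine hupne ((x:ℂ) + δ * Complex.I) ?_ h7
      simpa using h8
    exact h1.and (h2.and h3)
  refine ⟨{y ∈ Ioo a b | ¬((∀ i j, AnalyticAt ℂ (fun w => Λ w i j) ((y:ℝ):ℂ))
      ∧ (∀ i, AnalyticAt ℂ (fun w => g w i) ((y:ℝ):ℂ)) ∧ h ((y:ℝ):ℂ) ≠ 0)}, ?_, ?_, ?_⟩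
  · exact fun y hy => hy.1
  · intro x hx hacc
    have hev' := (tendsto_real_punctured x).eventually (hev x hx)
    rw [accPt_iff_frequently] at hacc
    have hev'' : ∀ᶠ y in nhds x, y ≠ x → ¬ (y ∈ Ioo a b ∧
        ¬((∀ i j, AnalyticAt ℂ (fun w => Λ w i j) ((y:ℝ):ℂ))
          ∧ (∀ i, AnalyticAt ℂ (fun w => g w i) ((y:ℝ):ℂ)) ∧ h ((y:ℝ):ℂ) ≠ 0)) := by
      have h9 := eventually_nhdsWithin_iff.mp hev'
      filter_upwards [h9] with y hy hyne hyD
      exact hyD.2 (hy hyne)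
    obtain ⟨y, hy1, hy2⟩ := (hacc.and_eventually hev'').exists
    exact hy2 hy1.1 hy1.2
  · intro x hx
    obtain ⟨hxab, hxD⟩ := hx
    have hP : (∀ i j, AnalyticAt ℂ (fun w => Λ w i j) ((x:ℝ):ℂ))
        ∧ (∀ i, AnalyticAt ℂ (fun w => g w i) ((x:ℝ):ℂ)) ∧ h ((x:ℝ):ℂ) ≠ 0 := by
      by_contra hc
      exact hxD ⟨hxab, hc⟩
    obtain ⟨hPΛ, hPg, hPh⟩ := hP
    have hconth : ContinuousAt h ((x:ℝ):ℂ) := by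
      refine detContAt fun i j => ?_
      have he : (fun w => (csqrt w • (1 : Matrix (Fin n) (Fin n) ℂ) + Complex.I • Λ w) i j)
          = fun w => csqrt w * (1 : Matrix (Fin n) (Fin n) ℂ) i j + Complex.I * Λ w i j := by
        funext w
        simp [Matrix.add_apply, Matrix.smul_apply, smul_eq_mul]
      rw [he]
      exact (((csqrt_diffAt (hslitx x hxab)).continuousAt).mul continuousAt_const).add
        (continuousAt_const.mul (hPΛ i j).continuousAt)
    have hball : ∀ᶠ z in nhds ((x:ℝ):ℂ),
        ((∀ i j, AnalyticAt ℂ (fun w => Λ w i j) z)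
          ∧ (∀ i, AnalyticAt ℂ (fun w => g w i) z) ∧ h z ≠ 0 ∧ z ∈ Complex.slitPlane) := by
      have e1 : ∀ᶠ z in nhds ((x:ℝ):ℂ), ∀ i j, AnalyticAt ℂ (fun w => Λ w i j) z := by
        rw [eventually_all]
        intro i
        rw [eventually_all]
        intro j
        exact (hPΛ i j).eventually_analyticAt
      have e2 : ∀ᶠ z in nhds ((x:ℝ):ℂ), ∀ i, AnalyticAt ℂ (fun w => g w i) z := by
        rw [eventually_all]
        intro i
        exact (hPg i).eventually_analyticAt
      have e3 : ∀ᶠ z in nhds ((x:ℝ):ℂ), h z ≠ 0 := hconth.eventually_ne hPh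
      have e4 : ∀ᶠ z in nhds ((x:ℝ):ℂ), z ∈ Complex.slitPlane :=
        Complex.isOpen_slitPlane.eventually_mem (hslitx x hxab)
      exact e1.and (e2.and (e3.and e4))
    obtain ⟨ε, hε, hballP⟩ := Metric.eventually_nhds_iff_ball.mp hball
    refine ⟨ε, hε, Phi n Λ g f, ?_, fun w _ _ => rfl⟩
    refine phiDiffOn Λ g hfc hR ?_ ?_ ?_ ?_
    · intro z hz
      exact (hballP z hz).2.2.2
    · intro i j z hz
      exact ((hballP z hz).1 i j).differentiableAt
    · intro i z hz
      exact ((hballP z hz).2.1 i).differentiableAt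
    · intro z hz
      exact (hballP z hz).2.2.1
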